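/- Let N ≥ 2 be an integer and 0 < a ≤ 1 a real number. Define g : ℝ → ℝ by g(ρ) = 1 − (1 − a·ρ)/(1 − (a·ρ)^N) when a·ρ ≠ 1 and g(ρ) = (N−1)/N when a·ρ = 1. Then g(ρ) < ρ for every ρ > 0; in particular g has no strictly positive fixed point. -/

import Mathlib

/-!
Write `x = a·ρ` and `S(x) = 1 + x + ⋯ + x^(N-1)`. The identity `1 - x^N = (1 - x)·S(x)` turns
`g(ρ)` into `1 - 1/S(x)` for every `x`, the value `(N-1)/N` at `x = 1` included. For `x > 0` the
same identity gives `(1 - x)·S(x) < 1`, i.e. `1 - 1/S(x) < x`; and `x ≤ ρ` because `a ≤ 1`.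
-/

open Finset

lemma ite_eq_one_sub_inv_geom_sum {K : Type*} [Field K] [CharZero K] [DecidableEq K] {N : ℕ}
    (hN : N ≠ 0) (x : K) :
    (if x = 1 then ((N : K) - 1) / N else 1 - (1 - x) / (1 - x ^ N)) =
      1 - (∑ i ∈ range N, x ^ i)⁻¹ := by
  split_ifs with hx
  · simp [hx, sub_div, div_self (Nat.cast_ne_zero.2 hN : (N : K) ≠ 0)]
  · rw [← mul_neg_geom_sum, div_mul_cancel_left₀ (sub_ne_zero.2 (Ne.symm hx))]

lemma one_sub_inv_geom_sum_lt {K : Type*} [Field K] [LinearOrder K] [IsStrictOrderedRing K]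
    {N : ℕ} (hN : N ≠ 0) {x : K} (hx : 0 < x) :
    1 - (∑ i ∈ range N, x ^ i)⁻¹ < x := by
  have hS : 0 < ∑ i ∈ range N, x ^ i := geom_sum_pos hx.le hN
  have hmul : (1 - x) * ∑ i ∈ range N, x ^ i < 1 := by
    rw [mul_neg_geom_sum]
    exact sub_lt_self 1 (pow_pos hx N)
  have : 1 - x < 1 / ∑ i ∈ range N, x ^ i := (lt_div_iff₀ hS).2 hmul
  rw [one_div] at this
  linarith

/-- Single-tier necessity in Theorem 2: for an integer `N ≥ 2` and a real `0 < a ≤ 1`,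
the map `g(ρ) = 1 − (1 − a·ρ)/(1 − (a·ρ)^N)` (extended by `(N−1)/N` at `a·ρ = 1`)
satisfies `g(ρ) < ρ` for every `ρ > 0`; in particular it has no strictly positive
fixed point. -/
theorem stmt_10 (N : ℕ) (hN : 2 ≤ N) (a : ℝ) (ha0 : 0 < a) (ha1 : a ≤ 1)
    (g : ℝ → ℝ)
    (hg : ∀ ρ : ℝ, g ρ = if a * ρ = 1 then ((N : ℝ) - 1) / N
      else 1 - (1 - a * ρ) / (1 - (a * ρ) ^ N)) :
    (∀ ρ : ℝ, 0 < ρ → g ρ < ρ) ∧ ¬∃ ρ : ℝ, 0 < ρ ∧ g ρ = ρ := by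
  have hN0 : N ≠ 0 := by omega
  have below : ∀ ρ : ℝ, 0 < ρ → g ρ < ρ := by
    intro ρ hρ
    rw [hg, ite_eq_one_sub_inv_geom_sum hN0]
    calc 1 - (∑ i ∈ range N, (a * ρ) ^ i)⁻¹ < a * ρ :=
          one_sub_inv_geom_sum_lt hN0 (mul_pos ha0 hρ)
      _ ≤ ρ := mul_le_of_le_one_left hρ.le ha1
  exact ⟨below, fun ⟨ρ, hρ, hfix⟩ => (below ρ hρ).ne hfix⟩
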